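/- Let G be a simple stochastic game and let T be an end component of G with t ∉ T such that no Maximizer state of T has an exiting action (i.e. there is no s ∈ T ∩ S_max and a ∈ Av(s) with (s,a) exiting T). Then V(s) = 0 for every s ∈ T. -/
import Mathlib


/-- A simple stochastic game (SG): a finite set of states `S` partitioned into
Maximizer states (`isMax s = true`) and Minimizer states (`isMax s = false`),
a target state, a sink state, a finite set of actions `A`, a nonempty set of
available actions at each state, and a transition function assigning to each
state and available action a probability distribution over states; the target
and the sink each have exactly one available action, a self-loop with
probability 1. -/
structure SG (S A : Type) [Fintype S] [DecidableEq S] [Fintype A] [DecidableEq A] where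
  isMax : S → Bool
  target : S
  sink : S
  target_ne_sink : target ≠ sink
  Av : S → Finset A
  Av_nonempty : ∀ s, (Av s).Nonempty
  δ : S → A → S → ℝ
  δ_nonneg : ∀ s a s', 0 ≤ δ s a s'
  δ_sum : ∀ s, ∀ a ∈ Av s, ∑ s', δ s a s' = 1
  target_loop : ∃ a, Av target = {a} ∧ δ target a target = 1
  sink_loop : ∃ a, Av sink = {a} ∧ δ sink a sink = 1

namespace SG

variable {S A : Type} [Fintype S] [DecidableEq S] [Fintype A] [DecidableEq A]

/-- `f(s,a) := Σ_{s'} δ(s,a)(s') · f(s')`. -/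
noncomputable def fval (G : SG S A) (f : S → ℝ) (s : S) (a : A) : ℝ :=
  ∑ s', G.δ s a s' * f s'

/-- `f : S → [0,1]`. -/
def InUnit (f : S → ℝ) : Prop := ∀ s, 0 ≤ f s ∧ f s ≤ 1

/-- The right-hand side of the Bellman equations at a (non-target, non-sink)
state `s`, with available actions given by `Av'`:
`max_{a ∈ Av'(s)} f(s,a)` at Maximizer states and `min_{a ∈ Av'(s)} f(s,a)`
at Minimizer states. -/
noncomputable def bellmanOn (G : SG S A) (Av' : S → Finset A) (f : S → ℝ) (s : S) : ℝ :=
  if G.isMax s then sSup (G.fval f s '' ↑(Av' s)) else sInf (G.fval f s '' ↑(Av' s))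

/-- `f : S → [0,1]` is a solution of the Bellman equations of the game with
available actions restricted to `Av'`. -/
def IsSolutionOn (G : SG S A) (Av' : S → Finset A) (f : S → ℝ) : Prop :=
  InUnit f ∧ f G.target = 1 ∧ f G.sink = 0 ∧
    ∀ s, s ≠ G.target → s ≠ G.sink → f s = G.bellmanOn Av' f s

/-- `f` is a solution of the Bellman equations of `G`. -/
def IsSolution (G : SG S A) (f : S → ℝ) : Prop := G.IsSolutionOn G.Av f

/-- `V` is the least solution of the Bellman equations of the game with
available actions restricted to `Av'` (the value function of that game). -/
def IsLeastSolutionOn (G : SG S A) (Av' : S → Finset A) (V : S → ℝ) : Prop :=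
  G.IsSolutionOn Av' V ∧ ∀ f, G.IsSolutionOn Av' f → ∀ s, V s ≤ f s

/-- `V` is the value function of `G`: the least solution of the Bellman
equations, in the pointwise order. -/
def IsValue (G : SG S A) (V : S → ℝ) : Prop := G.IsLeastSolutionOn G.Av V

/-- `U` is the greatest solution of the Bellman equations of `G`, in the
pointwise order. -/
def IsGreatestSolution (G : SG S A) (U : S → ℝ) : Prop :=
  G.IsSolution U ∧ ∀ f, G.IsSolution f → ∀ s, f s ≤ U s

/-- `(s,a)` exits `T`: some successor with positive probability is outside `T`. -/
def Exits (G : SG S A) (T : Finset S) (s : S) (a : A) : Prop :=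
  ∃ s', s' ∉ T ∧ 0 < G.δ s a s'

/-- `exit^max_f(T)`: the maximum of `f(s,a)` over Maximizer states `s ∈ T`
and available actions `a` with `(s,a)` exiting `T` (max ∅ = 0). -/
noncomputable def exitMax (G : SG S A) (f : S → ℝ) (T : Finset S) : ℝ :=
  sSup (insert (0:ℝ)
    {x : ℝ | ∃ s ∈ T, G.isMax s = true ∧ ∃ a ∈ G.Av s, G.Exits T s a ∧ x = G.fval f s a})

/-- `exit^min_f(T)`: the minimum of `f(s,a)` over Minimizer states `s ∈ T`
and available actions `a` with `(s,a)` exiting `T` (min ∅ = 1). -/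
noncomputable def exitMin (G : SG S A) (f : S → ℝ) (T : Finset S) : ℝ :=
  sInf (insert (1:ℝ)
    {x : ℝ | ∃ s ∈ T, G.isMax s = false ∧ ∃ a ∈ G.Av s, G.Exits T s a ∧ x = G.fval f s a})

/-- `T` is an end component of the game with available actions restricted to
`Av'`: `T` is nonempty and there is a nonempty set `B` of actions, each
available at some state of `T`, such that (1) every `a ∈ B ∩ Av'(s)` for
`s ∈ T` stays in `T`, and (2) every state of `T` can reach every other state
of `T` by a finite path staying in `T` and using only actions of `B`. -/
def IsECOn (G : SG S A) (Av' : S → Finset A) (T : Finset S) : Prop :=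
  T.Nonempty ∧ ∃ B : Finset A, B.Nonempty ∧
    (∀ a ∈ B, ∃ s ∈ T, a ∈ Av' s) ∧
    (∀ s ∈ T, ∀ a ∈ B ∩ Av' s, ∀ s', 0 < G.δ s a s' → s' ∈ T) ∧
    (∀ s ∈ T, ∀ s' ∈ T, Relation.ReflTransGen
      (fun x y => x ∈ T ∧ ∃ a ∈ B ∩ Av' x, 0 < G.δ x a y) s s')

/-- `T` is an end component (EC) of `G`. -/
def IsEC (G : SG S A) (T : Finset S) : Prop := G.IsECOn G.Av T

/-- `T` is a maximal end component (MEC) of the game with available actions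
restricted to `Av'`. -/
def IsMECOn (G : SG S A) (Av' : S → Finset A) (T : Finset S) : Prop :=
  G.IsECOn Av' T ∧ ∀ T', G.IsECOn Av' T' → T ⊆ T' → T = T'

/-- `T` is a maximal end component (MEC) of `G`. -/
def IsMEC (G : SG S A) (T : Finset S) : Prop := G.IsMECOn G.Av T

/-- The available actions of the game obtained from `G` by removing, at every
Minimizer state `s`, each action `a ∈ Av(s)` with `f(s,a) > f(s)`. -/
noncomputable def restrictAv (G : SG S A) (f : S → ℝ) (s : S) : Finset A :=
  if G.isMax s then G.Av s
  else (G.Av s).filter (fun a => ¬ f s < G.fval f s a)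

/-- `T` is a simple end component (SEC) of `G`, with respect to the value
function `V`: an EC with `V(s) = exit^max_V(T)` for all `s ∈ T`. -/
def IsSEC (G : SG S A) (V : S → ℝ) (T : Finset S) : Prop :=
  G.IsEC T ∧ ∀ s ∈ T, V s = G.exitMax V T

/-- `T` is a maximal simple end component (MSEC) of `G` with respect to `V`. -/
def IsMSEC (G : SG S A) (V : S → ℝ) (T : Finset S) : Prop :=
  G.IsSEC V T ∧ ∀ T', G.IsSEC V T' → T ⊆ T' → T = T'

/-- `DEFLATE(T,f)`: equal to `min(f(s), exit^max_f(T))` on `T` and to `f`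
outside `T`. -/
noncomputable def deflate (G : SG S A) (T : Finset S) (f : S → ℝ) (s : S) : ℝ :=
  if s ∈ T then min (f s) (G.exitMax f T) else f s

/-- The Bellman update: `1` at the target, `0` at the sink, and the Bellman
right-hand side elsewhere. -/
noncomputable def bellmanUpdate (G : SG S A) (f : S → ℝ) : S → ℝ :=
  fun s => if s = G.target then 1 else if s = G.sink then 0 else G.bellmanOn G.Av f s

/-- The lower sequence `L_n` of bounded value iteration: `L_0` is `0`
everywhere except `L_0(target) = 1`, and `L_{n+1}` is the Bellman update
of `L_n`. -/
noncomputable def Lseq (G : SG S A) : ℕ → S → ℝ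
  | 0 => fun s => if s = G.target then 1 else 0
  | n + 1 => G.bellmanUpdate (G.Lseq n)

end SG

section Aux

open Classical

namespace SG

variable {S A : Type} [Fintype S] [DecidableEq S] [Fintype A] [DecidableEq A]

lemma fval_nonneg (G : SG S A) {f : S → ℝ} (hf : ∀ s, 0 ≤ f s) (s : S) (a : A) :
    0 ≤ G.fval f s a :=
  Finset.sum_nonneg fun s' _ => mul_nonneg (G.δ_nonneg s a s') (hf s')

lemma fval_le_one (G : SG S A) {f : S → ℝ} (hf : ∀ s, f s ≤ 1) {s : S} {a : A}
    (ha : a ∈ G.Av s) : G.fval f s a ≤ 1 := by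
  calc G.fval f s a ≤ ∑ s', G.δ s a s' :=
        Finset.sum_le_sum fun s' _ => by
          have := mul_le_mul_of_nonneg_left (hf s') (G.δ_nonneg s a s')
          simpa using this
    _ = 1 := G.δ_sum s a ha

lemma fval_mono (G : SG S A) {f g : S → ℝ} (h : ∀ s, f s ≤ g s) (s : S) (a : A) :
    G.fval f s a ≤ G.fval g s a :=
  Finset.sum_le_sum fun s' _ => mul_le_mul_of_nonneg_left (h s') (G.δ_nonneg s a s')

lemma fval_image_nonempty (G : SG S A) (f : S → ℝ) (s : S) :
    (G.fval f s '' ↑(G.Av s)).Nonempty :=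
  (Finset.coe_nonempty.mpr (G.Av_nonempty s)).image _

lemma fval_image_finite (G : SG S A) (f : S → ℝ) (s : S) :
    (G.fval f s '' ↑(G.Av s)).Finite :=
  ((G.Av s).finite_toSet).image _

lemma bellmanOn_mem (G : SG S A) {f : S → ℝ} (hf : InUnit f) (s : S) :
    G.bellmanOn G.Av f s ∈ Set.Icc (0:ℝ) 1 := by
  have hne := G.fval_image_nonempty f s
  have hfin := G.fval_image_finite f s
  have hmem : ∀ x ∈ G.fval f s '' ↑(G.Av s), x ∈ Set.Icc (0:ℝ) 1 := by
    rintro x ⟨a, ha, rfl⟩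
    exact ⟨G.fval_nonneg (fun s => (hf s).1) s a, G.fval_le_one (fun s => (hf s).2) ha⟩
  unfold bellmanOn
  split
  · constructor
    · obtain ⟨x, hx⟩ := hne
      exact le_trans (hmem x hx).1 (le_csSup hfin.bddAbove hx)
    · exact csSup_le hne fun x hx => (hmem x hx).2
  · constructor
    · exact le_csInf hne fun x hx => (hmem x hx).1
    · obtain ⟨x, hx⟩ := hne
      exact le_trans (csInf_le hfin.bddBelow hx) (hmem x hx).2

lemma bellmanOn_mono (G : SG S A) {f g : S → ℝ} (h : ∀ s, f s ≤ g s) (s : S) :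
    G.bellmanOn G.Av f s ≤ G.bellmanOn G.Av g s := by
  unfold bellmanOn
  split
  · refine csSup_le (G.fval_image_nonempty f s) ?_
    rintro x ⟨a, ha, rfl⟩
    exact le_trans (G.fval_mono h s a)
      (le_csSup (G.fval_image_finite g s).bddAbove ⟨a, ha, rfl⟩)
  · refine le_csInf (G.fval_image_nonempty g s) ?_
    rintro x ⟨a, ha, rfl⟩
    exact le_trans (csInf_le (G.fval_image_finite f s).bddBelow ⟨a, ha, rfl⟩)
      (G.fval_mono h s a)

lemma bellmanUpdate_mem (G : SG S A) {f : S → ℝ} (hf : InUnit f) (s : S) :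
    G.bellmanUpdate f s ∈ Set.Icc (0:ℝ) 1 := by
  unfold bellmanUpdate
  split
  · exact ⟨zero_le_one, le_rfl⟩
  · split
    · exact ⟨le_rfl, zero_le_one⟩
    · exact G.bellmanOn_mem hf s

lemma bellmanUpdate_mono (G : SG S A) {f g : S → ℝ} (h : ∀ s, f s ≤ g s) (s : S) :
    G.bellmanUpdate f s ≤ G.bellmanUpdate g s := by
  unfold bellmanUpdate
  split
  · exact le_rfl
  · split
    · exact le_rfl
    · exact G.bellmanOn_mono h s

/-- Every state of an EC (with no exiting Maximizer action) has a staying action. -/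
lemma exists_stay (G : SG S A) {T : Finset S} (hT : G.IsEC T)
    (hnoMaxExit : ¬ ∃ s ∈ T, G.isMax s = true ∧ ∃ a ∈ G.Av s, G.Exits T s a) :
    ∀ s ∈ T, ∃ a ∈ G.Av s, ∀ s', 0 < G.δ s a s' → s' ∈ T := by
  obtain ⟨hTne, B, hBne, hBav, hBstay, hBreach⟩ := hT
  intro s hs
  by_cases hmax : G.isMax s
  · obtain ⟨a, ha⟩ := G.Av_nonempty s
    refine ⟨a, ha, fun s' hδ => ?_⟩
    by_contra hs'
    exact hnoMaxExit ⟨s, hs, hmax, a, ha, s', hs', hδ⟩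
  · have hexists : ∃ a, a ∈ B ∩ G.Av s := by
      by_contra hex
      push_neg at hex
      obtain ⟨a₀, ha₀⟩ := hBne
      obtain ⟨s₀, hs₀, hav₀⟩ := hBav a₀ ha₀
      have hne : s ≠ s₀ := by
        rintro rfl
        exact hex a₀ (Finset.mem_inter.mpr ⟨ha₀, hav₀⟩)
      rcases (hBreach s hs s₀ hs₀).cases_head with h | ⟨y, ⟨_, a, hmem, _⟩, _⟩
      · exact hne h
      · exact hex a hmem
    obtain ⟨a, hmem⟩ := hexists
    exact ⟨a, (Finset.mem_inter.mp hmem).2, fun s' h' => hBstay s hs a hmem s' h'⟩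

lemma fval_eq_zero (G : SG S A) {T : Finset S} {f : S → ℝ} {s : S} {a : A}
    (hstay : ∀ s', 0 < G.δ s a s' → s' ∈ T) (hf : ∀ s' ∈ T, f s' = 0) :
    G.fval f s a = 0 := by
  refine Finset.sum_eq_zero fun s' _ => ?_
  rcases (G.δ_nonneg s a s').eq_or_lt with h | h
  · rw [← h, zero_mul]
  · rw [hf s' (hstay s' h), mul_zero]

end SG

end Aux

/-- Let `T` be an end component with `t ∉ T` such that no
Maximizer state of `T` has an exiting action. Then `V(s) = 0` for every
`s ∈ T`. -/
theorem stmt11 {S A : Type} [Fintype S] [DecidableEq S] [Fintype A] [DecidableEq A]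
    (G : SG S A) (V : S → ℝ) (hV : G.IsValue V)
    (T : Finset S) (hT : G.IsEC T) (ht : G.target ∉ T)
    (hnoMaxExit : ¬ ∃ s ∈ T, G.isMax s = true ∧ ∃ a ∈ G.Av s, G.Exits T s a) :
    ∀ s ∈ T, V s = 0 := by
  haveI : Fact ((0:ℝ) ≤ 1) := ⟨zero_le_one⟩
  obtain ⟨⟨hVunit, hVt, hVz, hVbell⟩, hVleast⟩ := hV
  -- the Bellman operator on [0,1]^S
  set I := Set.Icc (0:ℝ) 1 with hI
  have hcoe_unit : ∀ h : S → I, SG.InUnit (fun s => (h s : ℝ)) := fun h s => (h s).2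
  set Φ : (S → I) →o (S → I) :=
    ⟨fun h s => ⟨G.bellmanUpdate (fun x => (h x : ℝ)) s,
        G.bellmanUpdate_mem (hcoe_unit h) s⟩,
      by
        intro h₁ h₂ hle s
        exact Subtype.mk_le_mk.mpr
          (G.bellmanUpdate_mono (fun x => Subtype.coe_le_coe.mpr (hle x)) s)⟩
    with hΦ
  set W : S → I := OrderHom.lfp Φ with hW
  have hfix : Φ W = W := OrderHom.map_lfp Φ
  -- W (coerced) is a solution
  have hWsol : G.IsSolution (fun s => (W s : ℝ)) := by
    refine ⟨hcoe_unit W, ?_, ?_, ?_⟩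
    · have := congrFun hfix G.target
      have h1 : ((Φ W) G.target : ℝ) = 1 := by
        simp [hΦ, SG.bellmanUpdate]
      rw [this] at h1
      exact h1
    · have := congrFun hfix G.sink
      have h0 : ((Φ W) G.sink : ℝ) = 0 := by
        simp [hΦ, SG.bellmanUpdate, G.target_ne_sink.symm]
      rw [this] at h0
      exact h0
    · intro s hst hsz
      have := congrFun hfix s
      have h0 : ((Φ W) s : ℝ) = G.bellmanOn G.Av (fun x => (W x : ℝ)) s := by
        simp [hΦ, SG.bellmanUpdate, hst, hsz]
      rw [this] at h0
      exact h0 ▸ rfl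
  -- the candidate pre-fixed point: 0 on T, V outside
  set f₀ : S → I := fun s =>
    if hs : s ∈ T then ⟨0, le_rfl, zero_le_one⟩ else ⟨V s, (hVunit s).1, (hVunit s).2⟩
    with hf₀
  have hf₀T : ∀ s ∈ T, ((f₀ s : ℝ)) = 0 := by
    intro s hs; simp [hf₀, hs]
  have hf₀leV : ∀ s, ((f₀ s : ℝ)) ≤ V s := by
    intro s
    by_cases hs : s ∈ T
    · rw [hf₀T s hs]; exact (hVunit s).1
    · simp [hf₀, hs]
  -- f₀ is a pre-fixed point of Φ
  have hpre : Φ f₀ ≤ f₀ := by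
    intro s
    rw [Subtype.mk_le_mk]
    show G.bellmanUpdate (fun x => (f₀ x : ℝ)) s ≤ (f₀ s : ℝ)
    unfold SG.bellmanUpdate
    by_cases hst : s = G.target
    · subst hst
      simp only [if_pos rfl]
      simp [hf₀, ht, hVt]
    · rw [if_neg hst]
      by_cases hsz : s = G.sink
      · subst hsz
        simp only [if_pos rfl]
        exact (f₀ G.sink).2.1
      · rw [if_neg hsz]
        by_cases hs : s ∈ T
        · -- Bellman RHS is ≤ 0 on T
          rw [hf₀T s hs]
          unfold SG.bellmanOn
          by_cases hmax : G.isMax s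
          · rw [if_pos hmax]
            refine csSup_le (G.fval_image_nonempty _ s) ?_
            rintro x ⟨a, ha, rfl⟩
            have hstay : ∀ s', 0 < G.δ s a s' → s' ∈ T := by
              intro s' hδ
              by_contra hs'
              exact hnoMaxExit ⟨s, hs, hmax, a, ha, s', hs', hδ⟩
            exact le_of_eq (G.fval_eq_zero hstay hf₀T)
          · rw [if_neg hmax]
            obtain ⟨a, ha, hstay⟩ := G.exists_stay hT hnoMaxExit s hs
            have : G.fval (fun x => (f₀ x : ℝ)) s a = 0 := G.fval_eq_zero hstay hf₀T
            exact le_trans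
              (csInf_le (G.fval_image_finite _ s).bddBelow ⟨a, ha, rfl⟩) this.le
        · -- outside T: f₀ = V there and Bellman is monotone
          have h1 : G.bellmanOn G.Av (fun x => (f₀ x : ℝ)) s ≤ G.bellmanOn G.Av V s :=
            G.bellmanOn_mono hf₀leV s
          have h2 : G.bellmanOn G.Av V s = V s := (hVbell s hst hsz).symm
          have h3 : ((f₀ s : ℝ)) = V s := by simp [hf₀, hs]
          rw [h3]
          exact h1.trans h2.le
  have hlfp : W ≤ f₀ := OrderHom.lfp_le Φ hpre
  intro s hs
  have h1 : V s ≤ (W s : ℝ) := hVleast _ hWsol s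
  have h2 : (W s : ℝ) ≤ (f₀ s : ℝ) := Subtype.coe_le_coe.mpr (hlfp s)
  rw [hf₀T s hs] at h2
  exact le_antisymm (h1.trans h2) (hVunit s).1
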